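/- For every feature i ∈ Fin m: Sv(cf_a, i) ≥ 0, Sv(cf_c, i) ≥ 0, and Sv(cf_n, i) ≤ 0. -/
import Mathlib


open scoped Classical

noncomputable section

/-- The set of points of feature space agreeing with `v` on the features in `S`. -/
def Upsilon {m : ℕ} (D : Fin m → Type) [∀ i, Fintype (D i)] (v : ∀ i, D i)
    (S : Finset (Fin m)) : Finset (∀ i, D i) :=
  Finset.univ.filter (fun x => ∀ i ∈ S, x i = v i)

/-- The similarity characteristic function. -/
def cf_s {m : ℕ} (D : Fin m → Type) [∀ i, Fintype (D i)] (v : ∀ i, D i)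
    (σ : (∀ i, D i) → Prop) (S : Finset (Fin m)) : ℝ :=
  (1 / (Upsilon D v S).card) * ∑ x ∈ Upsilon D v S, (if σ x then (1 : ℝ) else 0)

/-- The WAXp-based characteristic function. -/
def cf_a {m : ℕ} (D : Fin m → Type) [∀ i, Fintype (D i)] (v : ∀ i, D i)
    (σ : (∀ i, D i) → Prop) (S : Finset (Fin m)) : ℝ :=
  if cf_s D v σ S = 1 then 1 else 0

/-- The complement of the WAXp-based characteristic function. -/
def cf_n {m : ℕ} (D : Fin m → Type) [∀ i, Fintype (D i)] (v : ∀ i, D i)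
    (σ : (∀ i, D i) → Prop) (S : Finset (Fin m)) : ℝ :=
  if cf_s D v σ S < 1 then 1 else 0

/-- The WCXp-based characteristic function. -/
def cf_c {m : ℕ} (D : Fin m → Type) [∀ i, Fintype (D i)] (v : ∀ i, D i)
    (σ : (∀ i, D i) → Prop) (S : Finset (Fin m)) : ℝ :=
  if cf_s D v σ (Finset.univ \ S) < 1 then 1 else 0

/-- Weak abductive explanation. -/
def WAXp {m : ℕ} (D : Fin m → Type) [∀ i, Fintype (D i)] (v : ∀ i, D i)
    (σ : (∀ i, D i) → Prop) (S : Finset (Fin m)) : Prop :=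
  ∀ x ∈ Upsilon D v S, σ x

/-- Weak contrastive explanation. -/
def WCXp {m : ℕ} (D : Fin m → Type) (v : ∀ i, D i)
    (σ : (∀ i, D i) → Prop) (S : Finset (Fin m)) : Prop :=
  ∃ x : ∀ i, D i, (∀ i ∉ S, x i = v i) ∧ ¬ σ x

/-- The Shapley value of feature `i` for characteristic function `ν`. -/
def Sv {m : ℕ} (ν : Finset (Fin m) → ℝ) (i : Fin m) : ℝ :=
  ∑ S ∈ (Finset.univ \ ({i} : Finset (Fin m))).powerset,
    ((Nat.factorial S.card * Nat.factorial (m - S.card - 1) : ℝ) / (Nat.factorial m : ℝ)) *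
      (ν (insert i S) - ν S)


lemma mem_ups {m : ℕ} (D : Fin m → Type) [∀ i, Fintype (D i)] (v : ∀ i, D i)
    (S : Finset (Fin m)) : v ∈ Upsilon D v S := by
  simp [Upsilon]

lemma ups_card_pos {m : ℕ} (D : Fin m → Type) [∀ i, Fintype (D i)] (v : ∀ i, D i)
    (S : Finset (Fin m)) : 0 < (Upsilon D v S).card :=
  Finset.card_pos.2 ⟨v, mem_ups D v S⟩

lemma ups_anti {m : ℕ} (D : Fin m → Type) [∀ i, Fintype (D i)] (v : ∀ i, D i)
    {S T : Finset (Fin m)} (h : S ⊆ T) : Upsilon D v T ⊆ Upsilon D v S := by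
  intro x hx
  simp only [Upsilon, Finset.mem_filter, Finset.mem_univ, true_and] at hx ⊢
  exact fun i hi => hx i (h hi)

lemma cf_s_le_one {m : ℕ} (D : Fin m → Type) [∀ i, Fintype (D i)] (v : ∀ i, D i)
    (σ : (∀ i, D i) → Prop) (S : Finset (Fin m)) : cf_s D v σ S ≤ 1 := by
  have hc : (0:ℝ) < (Upsilon D v S).card := by exact_mod_cast ups_card_pos D v S
  rw [cf_s, one_div, inv_mul_le_iff₀ hc, mul_one]
  calc (∑ x ∈ Upsilon D v S, (if σ x then (1:ℝ) else 0))
      ≤ ∑ x ∈ Upsilon D v S, (1:ℝ) := by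
        apply Finset.sum_le_sum; intro x _; split <;> norm_num
    _ = (Upsilon D v S).card := by simp

lemma cf_s_eq_one_iff {m : ℕ} (D : Fin m → Type) [∀ i, Fintype (D i)] (v : ∀ i, D i)
    (σ : (∀ i, D i) → Prop) (S : Finset (Fin m)) :
    cf_s D v σ S = 1 ↔ ∀ x ∈ Upsilon D v S, σ x := by
  have hc : (0:ℝ) < (Upsilon D v S).card := by exact_mod_cast ups_card_pos D v S
  rw [cf_s, one_div, inv_mul_eq_iff_eq_mul₀ hc.ne', mul_one]
  constructor
  · intro h x hx
    by_contra hσ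
    have hlt : (∑ y ∈ Upsilon D v S, (if σ y then (1:ℝ) else 0)) < ∑ y ∈ Upsilon D v S, (1:ℝ) := by
      apply Finset.sum_lt_sum
      · intro y _; split <;> norm_num
      · exact ⟨x, hx, by simp [hσ]⟩
    simp only [Finset.sum_const, nsmul_eq_mul, mul_one] at hlt
    linarith [h]
  · intro h
    rw [Finset.sum_congr rfl (fun x hx => if_pos (h x hx))]
    simp

lemma cf_a_mono {m : ℕ} (D : Fin m → Type) [∀ i, Fintype (D i)] (v : ∀ i, D i)
    (σ : (∀ i, D i) → Prop) {S T : Finset (Fin m)} (h : S ⊆ T) :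
    cf_a D v σ S ≤ cf_a D v σ T := by
  unfold cf_a
  by_cases hS : cf_s D v σ S = 1
  · have hT : cf_s D v σ T = 1 := by
      rw [cf_s_eq_one_iff] at hS ⊢
      exact fun x hx => hS x (ups_anti D v h hx)
    simp [hS, hT]
  · simp only [if_neg hS]
    split <;> norm_num

lemma cf_n_eq {m : ℕ} (D : Fin m → Type) [∀ i, Fintype (D i)] (v : ∀ i, D i)
    (σ : (∀ i, D i) → Prop) (S : Finset (Fin m)) :
    cf_n D v σ S = 1 - cf_a D v σ S := by
  unfold cf_n cf_a
  by_cases h : cf_s D v σ S = 1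
  · simp [h]
  · have : cf_s D v σ S < 1 := lt_of_le_of_ne (cf_s_le_one D v σ S) h
    simp [h, this]

lemma cf_c_mono {m : ℕ} (D : Fin m → Type) [∀ i, Fintype (D i)] (v : ∀ i, D i)
    (σ : (∀ i, D i) → Prop) {S T : Finset (Fin m)} (h : S ⊆ T) :
    cf_c D v σ S ≤ cf_c D v σ T := by
  have hsub : Finset.univ \ T ⊆ Finset.univ \ S := Finset.sdiff_subset_sdiff le_rfl h
  have := cf_a_mono D v σ hsub
  have eS : cf_c D v σ S = 1 - cf_a D v σ (Finset.univ \ S) := cf_n_eq D v σ _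
  have eT : cf_c D v σ T = 1 - cf_a D v σ (Finset.univ \ T) := cf_n_eq D v σ _
  rw [eS, eT]; linarith

lemma sv_nonneg_of_mono {m : ℕ} (ν : Finset (Fin m) → ℝ)
    (hν : ∀ {S T : Finset (Fin m)}, S ⊆ T → ν S ≤ ν T) (i : Fin m) : 0 ≤ Sv ν i := by
  apply Finset.sum_nonneg
  intro S _
  apply mul_nonneg
  · positivity
  · have : ν S ≤ ν (insert i S) := hν (Finset.subset_insert i S)
    linarith

theorem stmt3 {m : ℕ} (hm : 1 ≤ m) (D : Fin m → Type) [∀ i, Fintype (D i)]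
    [∀ i, Nonempty (D i)] (v : ∀ i, D i) (σ : (∀ i, D i) → Prop) :
    ∀ i : Fin m,
      0 ≤ Sv (cf_a D v σ) i ∧ 0 ≤ Sv (cf_c D v σ) i ∧ Sv (cf_n D v σ) i ≤ 0 := by
  intro i
  refine ⟨sv_nonneg_of_mono _ (fun h => cf_a_mono D v σ h) i,
    sv_nonneg_of_mono _ (fun h => cf_c_mono D v σ h) i, ?_⟩
  have : Sv (cf_n D v σ) i = -Sv (cf_a D v σ) i := by
    unfold Sv
    rw [← Finset.sum_neg_distrib]
    apply Finset.sum_congr rfl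
    intro S _
    rw [cf_n_eq, cf_n_eq]
    ring
  rw [this]
  have := sv_nonneg_of_mono _ (fun h => cf_a_mono D v σ h) i
  linarith


end
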